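/- Let M be a POMDP and C a deterministic k-FSC. Then for every t ≥ 2, the conditional entropy of the next state of M given the full state history equals the one-step conditional entropy of the induced Markov chain: H^C(S_t | S_1,...,S_{t-1}) = H^{u_C}(S_{M,k,t} | S_{M,k,t-1}). -/

import Mathlib

/-! A deterministic controller moves its memory along the fixed orbit `q₁, f q₁, f² q₁, …`,
independently of what happens, so a trajectory of the induced chain with positive probability
is determined by its state component. The state history therefore has the same law as the
chain's trajectory, and `H(S_t | S_1, …, S_{t-1})` becomes the entropy of the chain's last step
given its whole past. By the Markov property, `p(w) = p(w_1, …, w_{t-1}) · T(w_{t-1}, w_t)`,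
so that entropy is `-E log T(X_{t-1}, X_t)`; the joint law of `(X_{t-1}, X_t)` is
`p_{t-1}(x) · T(x, y)` and `T` is stochastic, so regrouping by the last pair of states gives
`H(X_t | X_{t-1})`. -/

open Finset

section

variable {S Q Z A : Type*} [Fintype S] [Fintype Q] [Fintype Z] [Fintype A]
variable [DecidableEq S] [DecidableEq Q]

/-- One-step transition probabilities of the Markov chain on `S × Q` induced by the
POMDP `(S, sI, A, P, Z, O)` and the `k`-FSC `(Q, q1, γ, δ)`:
`T(⟨s',q'⟩ | ⟨s,q⟩) = ∑_a ∑_z O(z|s) P(s'|s,a) γ(a|q,z) δ(q'|q,z,a)`. -/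
def fscT (P : S → A → S → ℝ) (O : S → Z → ℝ)
    (γ : Q → Z → A → ℝ) (δ : Q → Z → A → Q → ℝ) (x y : S × Q) : ℝ :=
  ∑ a : A, ∑ z : Z, O x.1 z * P x.1 a y.1 * γ x.2 z a * δ x.2 z a y.2

/-- The pmf of a length-`t` trajectory of the induced Markov chain on `S × Q`,
started at `⟨sI, q1⟩`. -/
def fscChainProb (sI : S) (q1 : Q) (P : S → A → S → ℝ) (O : S → Z → ℝ)
    (γ : Q → Z → A → ℝ) (δ : Q → Z → A → Q → ℝ) (t : ℕ) (w : Fin t → S × Q) : ℝ :=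
  (if h : 0 < t then (if w ⟨0, h⟩ = (sI, q1) then (1 : ℝ) else 0) else 1) *
    ∏ k : Fin t, (if h : k.val + 1 < t then fscT P O γ δ (w k) (w ⟨k.val + 1, h⟩) else 1)

/-- The pmf of the state history `(S_1,…,S_t)` of the POMDP under the FSC: the marginal
of the induced chain onto the `S`-component. -/
def fscStateMargin (sI : S) (q1 : Q) (P : S → A → S → ℝ) (O : S → Z → ℝ)
    (γ : Q → Z → A → ℝ) (δ : Q → Z → A → Q → ℝ) (t : ℕ) (u : Fin t → S) : ℝ :=
  ∑ qs : Fin t → Q, fscChainProb sI q1 P O γ δ t (fun i => (u i, qs i))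

section MarkovPath

variable {α : Type*} [DecidableEq α] (x₀ : α) (T : α → α → ℝ)

/- The body of `fscChainProb` with an arbitrary kernel, so that
`fscChainProb sI q1 P O γ δ = markovPathProb (sI, q1) (fscT P O γ δ)` holds definitionally. -/
def markovPathProb (t : ℕ) (w : Fin t → α) : ℝ :=
  (if h : 0 < t then (if w ⟨0, h⟩ = x₀ then (1 : ℝ) else 0) else 1) *
    ∏ k : Fin t, (if h : k.val + 1 < t then T (w k) (w ⟨k.val + 1, h⟩) else 1)

theorem markovPathProb_succ (m : ℕ) (w : Fin (m + 1) → α) :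
    markovPathProb x₀ T (m + 1) w =
      (if w 0 = x₀ then 1 else 0) * ∏ k : Fin m, T (w k.castSucc) (w k.succ) := by
  rw [markovPathProb, dif_pos m.succ_pos, Fin.prod_univ_castSucc, dif_neg (by simp), mul_one]
  congr 1
  refine prod_congr rfl fun k _ => ?_
  rw [dif_pos (by simp)]
  rfl

theorem markovPathProb_snoc (n : ℕ) (v : Fin (n + 1) → α) (y : α) :
    markovPathProb x₀ T (n + 2) (Fin.snoc v y) =
      markovPathProb x₀ T (n + 1) v * T (v (Fin.last n)) y := by
  rw [markovPathProb_succ, markovPathProb_succ, Fin.prod_univ_castSucc, mul_assoc]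
  simp only [Fin.snoc_castSucc, Fin.succ_castSucc, ← Fin.castSucc_zero, Fin.succ_last,
    Fin.snoc_last]

theorem markovPathProb_eq_init_mul (n : ℕ) (w : Fin (n + 2) → α) :
    markovPathProb x₀ T (n + 2) w =
      markovPathProb x₀ T (n + 1) (Fin.init w) *
        T (w (Fin.last n).castSucc) (w (Fin.last (n + 1))) := by
  conv_lhs => rw [← Fin.snoc_init_self w]
  exact markovPathProb_snoc x₀ T n _ _

variable [Fintype α]

def markovMarginal (m : ℕ) (x : α) : ℝ :=
  ∑ v ∈ univ.filter (fun v : Fin (m + 1) → α => v (Fin.last m) = x),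
    markovPathProb x₀ T (m + 1) v

def markovPairMarginal (n : ℕ) (x y : α) : ℝ :=
  ∑ w ∈ univ.filter (fun w : Fin (n + 2) → α =>
      w (Fin.last n).castSucc = x ∧ w (Fin.last (n + 1)) = y),
    markovPathProb x₀ T (n + 2) w

theorem markovPairMarginal_eq_mul (n : ℕ) (x y : α) :
    markovPairMarginal x₀ T n x y = markovMarginal x₀ T n x * T x y := by
  rw [markovPairMarginal, markovMarginal, sum_filter, sum_filter, sum_mul,
    ← (Fin.snocEquiv fun _ => α).sum_comp, Fintype.sum_prod_type, sum_comm]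
  refine sum_congr rfl fun v _ => ?_
  simp only [Fin.snocEquiv, Equiv.coe_fn_mk, Fin.snoc_castSucc, Fin.snoc_last,
    markovPathProb_snoc]
  by_cases hv : v (Fin.last n) = x <;> simp [hv]

theorem sum_markovPairMarginal (hT : ∀ x, ∑ y, T x y = 1) (n : ℕ) (x : α) :
    ∑ y, markovPairMarginal x₀ T n x y = markovMarginal x₀ T n x := by
  simp only [markovPairMarginal_eq_mul, ← mul_sum, hT, mul_one]

theorem sum_markovPathProb_mul_log_div_init (n : ℕ) :
    ∑ w : Fin (n + 2) → α, markovPathProb x₀ T (n + 2) w *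
        Real.log (markovPathProb x₀ T (n + 2) w / markovPathProb x₀ T (n + 1) (Fin.init w)) =
      ∑ w : Fin (n + 2) → α, markovPathProb x₀ T (n + 2) w *
        Real.log (T (w (Fin.last n).castSucc) (w (Fin.last (n + 1)))) := by
  refine sum_congr rfl fun w _ => ?_
  rw [markovPathProb_eq_init_mul]
  by_cases h : markovPathProb x₀ T (n + 1) (Fin.init w) = 0
  · simp [h]
  · rw [mul_div_cancel_left₀ _ h]

theorem sum_markovPathProb_mul_log_eq_sum_pairMarginal (n : ℕ) :
    ∑ w : Fin (n + 2) → α, markovPathProb x₀ T (n + 2) w *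
        Real.log (T (w (Fin.last n).castSucc) (w (Fin.last (n + 1)))) =
      ∑ x, ∑ y, markovPairMarginal x₀ T n x y * Real.log (T x y) := by
  rw [← sum_fiberwise univ (fun w => (w (Fin.last n).castSucc, w (Fin.last (n + 1)))),
    Fintype.sum_prod_type]
  refine sum_congr rfl fun x _ => sum_congr rfl fun y _ => ?_
  rw [markovPairMarginal, sum_mul]
  refine sum_congr (by ext; simp [Prod.ext_iff]) fun w hw => ?_
  obtain ⟨hx, hy⟩ := (mem_filter.1 hw).2
  rw [hx, hy]

theorem sum_markovPairMarginal_mul_log_div (hT : ∀ x, ∑ y, T x y = 1) (n : ℕ) :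
    ∑ x, ∑ y, markovPairMarginal x₀ T n x y *
        Real.log (markovPairMarginal x₀ T n x y / ∑ y', markovPairMarginal x₀ T n x y') =
      ∑ w : Fin (n + 2) → α, markovPathProb x₀ T (n + 2) w *
        Real.log (T (w (Fin.last n).castSucc) (w (Fin.last (n + 1)))) := by
  rw [sum_markovPathProb_mul_log_eq_sum_pairMarginal]
  refine sum_congr rfl fun x _ => sum_congr rfl fun y _ => ?_
  rw [sum_markovPairMarginal x₀ T hT, markovPairMarginal_eq_mul]
  by_cases h : markovMarginal x₀ T n x = 0
  · simp [h]
  · rw [mul_div_cancel_left₀ _ h]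

end MarkovPath

section DeterministicMemory

variable {σ μ : Type*} [DecidableEq σ] [DecidableEq μ]
  (s₀ : σ) (q₀ : μ) (T : σ × μ → σ × μ → ℝ) (f : μ → μ)

def memoryLift {t : ℕ} (u : Fin t → σ) : Fin t → σ × μ := fun i => (u i, f^[i] q₀)

theorem memory_eq_iterate_of_markovPathProb_ne_zero (hT : ∀ x y, T x y ≠ 0 → y.2 = f x.2)
    {m : ℕ} {w : Fin (m + 1) → σ × μ} (hw : markovPathProb (s₀, q₀) T (m + 1) w ≠ 0)
    (i : Fin (m + 1)) : (w i).2 = f^[i] q₀ := by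
  rw [markovPathProb_succ] at hw
  obtain ⟨hstart, hsteps⟩ := mul_ne_zero_iff.1 hw
  induction i using Fin.induction with
  | zero =>
    rw [ne_eq, ite_eq_right_iff, not_forall] at hstart
    obtain ⟨h0, -⟩ := hstart
    simp [h0]
  | succ k ih =>
    rw [hT _ _ (prod_ne_zero_iff.1 hsteps k (mem_univ k)), ih]
    exact (Function.iterate_succ_apply' f k q₀).symm

theorem sum_markovPathProb_memory_mul [Fintype μ] (hT : ∀ x y, T x y ≠ 0 → y.2 = f x.2)
    {m : ℕ} (u : Fin (m + 1) → σ) (g : (Fin (m + 1) → σ × μ) → ℝ) :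
    ∑ qs : Fin (m + 1) → μ, markovPathProb (s₀, q₀) T (m + 1) (fun i => (u i, qs i)) *
        g (fun i => (u i, qs i)) =
      markovPathProb (s₀, q₀) T (m + 1) (memoryLift q₀ f u) * g (memoryLift q₀ f u) := by
  refine sum_eq_single (fun i : Fin (m + 1) => f^[i] q₀) (fun qs _ hqs => ?_)
    (fun h => absurd (mem_univ _) h)
  by_contra h
  exact hqs <| funext <|
    memory_eq_iterate_of_markovPathProb_ne_zero s₀ q₀ T f hT (left_ne_zero_of_mul h)

theorem sum_markovPathProb_mul_eq_sum_memoryLift [Fintype σ] [Fintype μ]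
    (hT : ∀ x y, T x y ≠ 0 → y.2 = f x.2) {m : ℕ} (g : (Fin (m + 1) → σ × μ) → ℝ) :
    ∑ w, markovPathProb (s₀, q₀) T (m + 1) w * g w =
      ∑ u, markovPathProb (s₀, q₀) T (m + 1) (memoryLift q₀ f u) * g (memoryLift q₀ f u) := by
  rw [← (Equiv.arrowProdEquivProdArrow _ (fun _ => σ) (fun _ => μ)).symm.sum_comp,
    Fintype.sum_prod_type]
  exact sum_congr rfl fun u _ => sum_markovPathProb_memory_mul s₀ q₀ T f hT u g

end DeterministicMemory

section FiniteStateController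

variable {σ μ ζ ι : Type*} [Fintype ζ] [Fintype ι]
  (P : σ → ι → σ → ℝ) (O : σ → ζ → ℝ) (γ : μ → ζ → ι → ℝ) (δ : μ → ζ → ι → μ → ℝ)

theorem fscT_memory_eq_of_ne_zero [DecidableEq μ] (f : μ → μ)
    (hdet : ∀ q z a q', δ q z a q' = if q' = f q then (1 : ℝ) else 0) (x y : σ × μ)
    (h : fscT P O γ δ x y ≠ 0) : y.2 = f x.2 := by
  by_contra hy
  exact h (by simp [fscT, hdet, hy])

theorem sum_fscT_eq_one [Fintype σ] [Fintype μ] (hP1 : ∀ s a, ∑ s', P s a s' = 1)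
    (hO1 : ∀ s, ∑ z, O s z = 1) (hγ1 : ∀ q z, ∑ a, γ q z a = 1)
    (hδ1 : ∀ q z a, ∑ q', δ q z a q' = 1) (x : σ × μ) :
    ∑ y, fscT P O γ δ x y = 1 := by
  calc ∑ y, fscT P O γ δ x y
      = ∑ a, ∑ z, ∑ y : σ × μ, O x.1 z * γ x.2 z a * (P x.1 a y.1 * δ x.2 z a y.2) := by
        simp only [fscT]
        rw [sum_comm]
        refine sum_congr rfl fun a _ => ?_
        rw [sum_comm]
        exact sum_congr rfl fun z _ => sum_congr rfl fun y _ => by ring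
    _ = ∑ a, ∑ z, O x.1 z * γ x.2 z a * ((∑ s', P x.1 a s') * ∑ q', δ x.2 z a q') := by
        simp only [← mul_sum, Fintype.sum_prod_type, sum_mul_sum]
    _ = ∑ z, O x.1 z * ∑ a, γ x.2 z a := by
        simp only [hP1, hδ1, mul_one, mul_sum]
        exact sum_comm
    _ = 1 := by simp only [hγ1, mul_one, hO1]

theorem fscStateMargin_eq_markovPathProb_memoryLift [DecidableEq σ] [DecidableEq μ] [Fintype μ]
    (sI : σ) (q1 : μ) (f : μ → μ)
    (hdet : ∀ q z a q', δ q z a q' = if q' = f q then (1 : ℝ) else 0) (m : ℕ)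
    (u : Fin (m + 1) → σ) :
    fscStateMargin sI q1 P O γ δ (m + 1) u =
      markovPathProb (sI, q1) (fscT P O γ δ) (m + 1) (memoryLift q1 f u) := by
  have h := sum_markovPathProb_memory_mul sI q1 (fscT P O γ δ) f
    (fscT_memory_eq_of_ne_zero P O γ δ f hdet) u (fun _ => 1)
  simp only [mul_one] at h
  exact h

theorem sum_fscStateMargin_mul_log_div_init [DecidableEq σ] [DecidableEq μ] [Fintype σ]
    [Fintype μ] (sI : σ) (q1 : μ) (f : μ → μ)
    (hdet : ∀ q z a q', δ q z a q' = if q' = f q then (1 : ℝ) else 0) (n : ℕ) :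
    ∑ u : Fin (n + 2) → σ, fscStateMargin sI q1 P O γ δ (n + 2) u *
        Real.log (fscStateMargin sI q1 P O γ δ (n + 2) u /
          fscStateMargin sI q1 P O γ δ (n + 1) (Fin.init u)) =
      ∑ w, markovPathProb (sI, q1) (fscT P O γ δ) (n + 2) w *
        Real.log (markovPathProb (sI, q1) (fscT P O γ δ) (n + 2) w /
          markovPathProb (sI, q1) (fscT P O γ δ) (n + 1) (Fin.init w)) := by
  rw [sum_markovPathProb_mul_eq_sum_memoryLift sI q1 _ f
    (fscT_memory_eq_of_ne_zero P O γ δ f hdet)]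
  simp only [fscStateMargin_eq_markovPathProb_memoryLift P O γ δ sI q1 f hdet]
  -- `Fin.init (memoryLift q1 f u)` is `memoryLift q1 f (Fin.init u)` by definition.
  rfl

end FiniteStateController

/-- Proposition 1: for a POMDP `M` and a deterministic `k`-FSC (the successor memory
state `f q` is independent of the observation and action), for every `t ≥ 2`,
`H^C(S_t | S_1,…,S_{t-1}) = H^{u_C}(S_{M,k,t} | S_{M,k,t-1})`: the conditional entropy of
the next POMDP state given the full state history equals the one-step conditional entropy
of the induced Markov chain (conventions `0 log 0 = 0`, `x/0 = 0`). -/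
theorem stmt8 (sI : S) (q1 : Q) (P : S → A → S → ℝ) (O : S → Z → ℝ)
    (γ : Q → Z → A → ℝ) (δ : Q → Z → A → Q → ℝ)
    (hP1 : ∀ s a, ∑ s', P s a s' = 1)
    (hO1 : ∀ s, ∑ z, O s z = 1)
    (hγ1 : ∀ q z, ∑ a, γ q z a = 1)
    (f : Q → Q) (hdet : ∀ q z a q', δ q z a q' = if q' = f q then (1 : ℝ) else 0)
    (t : ℕ) (ht : 2 ≤ t) :
    (-∑ u : Fin t → S, fscStateMargin sI q1 P O γ δ t u *
        Real.log (fscStateMargin sI q1 P O γ δ t u /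
          fscStateMargin sI q1 P O γ δ (t - 1) (fun i => u (Fin.castLE (Nat.sub_le t 1) i))))
    =
    (-∑ x : S × Q, ∑ y : S × Q,
        (∑ w ∈ univ.filter (fun w : Fin t → S × Q =>
            w ⟨t - 2, by omega⟩ = x ∧ w ⟨t - 1, by omega⟩ = y),
          fscChainProb sI q1 P O γ δ t w) *
        Real.log ((∑ w ∈ univ.filter (fun w : Fin t → S × Q =>
            w ⟨t - 2, by omega⟩ = x ∧ w ⟨t - 1, by omega⟩ = y),
          fscChainProb sI q1 P O γ δ t w) /
          ∑ y' : S × Q, ∑ w ∈ univ.filter (fun w : Fin t → S × Q =>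
            w ⟨t - 2, by omega⟩ = x ∧ w ⟨t - 1, by omega⟩ = y'),
          fscChainProb sI q1 P O γ δ t w)) := by
  obtain ⟨n, rfl⟩ : ∃ n, t = n + 2 := ⟨t - 2, by omega⟩
  have hδ1 (q : Q) (z : Z) (a : A) : ∑ q', δ q z a q' = 1 := by simp [hdet]
  have hrow := sum_fscT_eq_one P O γ δ hP1 hO1 hγ1 hδ1
  -- For `t = n + 2`, the indices `⟨t - 2, _⟩`, `⟨t - 1, _⟩` and `Fin.castLE _` of the statement
  -- are `(Fin.last n).castSucc`, `Fin.last (n + 1)` and `Fin.init` by definition.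
  exact congrArg Neg.neg <|
    (sum_fscStateMargin_mul_log_div_init P O γ δ sI q1 f hdet n).trans <|
      (sum_markovPathProb_mul_log_div_init _ _ n).trans
        (sum_markovPairMarginal_mul_log_div _ _ hrow n).symm

end
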